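/- Every tame finite-dimensional algebra A over an algebraically closed field K of characteristic zero is Schur-tame. -/

import Mathlib

/- ------------------------------------------------------------------
  Common framework: quivers, matrix representation varieties with the
  Zariski topology, the base-change group action, (semi-)stability,
  Schur modules, direct sums, moduli spaces as topological GIT
  quotients, semi-invariants, normality via coordinate rings, and the
  tame / Schur-tame / strictly wild conditions.
------------------------------------------------------------------ -/

namespace ModuliPaper

/-- A finite quiver: vertices `V`, arrows `Ar`, tail `s` and head `t`. -/
structure Quiv where
  V : Type
  Ar : Type
  [fintV : Fintype V]
  [decV : DecidableEq V]
  [fintA : Fintype Ar]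
  [decA : DecidableEq Ar]
  s : Ar → V
  t : Ar → V

attribute [instance] Quiv.fintV Quiv.decV Quiv.fintA Quiv.decA

variable (K : Type) [Field K]

/-- Affine space over `K`, carrying the Zariski topology (below). -/
def AffSp (ι : Type) : Type := ι → K

/-- The Zariski topology on affine space: the basic open sets are the
complements of hypersurfaces. -/
noncomputable instance AffSp.topologicalSpace (ι : Type) : TopologicalSpace (AffSp K ι) :=
  TopologicalSpace.generateFrom
    {U | ∃ p : MvPolynomial ι K, U = {x : AffSp K ι | MvPolynomial.eval x p ≠ 0}}

/-- A point of the representation space of the quiver `Q` with dimension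
vector `d`: a matrix for every arrow. -/
structure Rep (Q : Quiv) (d : Q.V → ℕ) where
  mat : ∀ a : Q.Ar, Matrix (Fin (d (Q.t a))) (Fin (d (Q.s a))) K

/-- The coordinates of the representation space. -/
def CoordIdx (Q : Quiv) (d : Q.V → ℕ) : Type :=
  Σ a : Q.Ar, Fin (d (Q.t a)) × Fin (d (Q.s a))

def Rep.coords {Q : Quiv} {d : Q.V → ℕ} (M : Rep K Q d) : AffSp K (CoordIdx Q d) :=
  fun c => M.mat c.1 c.2.1 c.2.2

/-- The Zariski topology on the representation space. -/
noncomputable instance Rep.topologicalSpace (Q : Quiv) (d : Q.V → ℕ) :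
    TopologicalSpace (Rep K Q d) :=
  TopologicalSpace.induced (Rep.coords K) inferInstance

/-- The base change group `GL(d) = ∏ₓ GL(d(x),K)` (as a family of invertible
matrices) acting by simultaneous conjugation. -/
def glAct {Q : Quiv} {d : Q.V → ℕ}
    (g : ∀ x : Q.V, Matrix.GeneralLinearGroup (Fin (d x)) K) (M : Rep K Q d) :
    Rep K Q d :=
  ⟨fun a => (g (Q.t a) : Matrix (Fin (d (Q.t a))) (Fin (d (Q.t a))) K) * M.mat a *
    (((g (Q.s a))⁻¹ : Matrix.GeneralLinearGroup (Fin (d (Q.s a))) K) :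
      Matrix (Fin (d (Q.s a))) (Fin (d (Q.s a))) K)⟩

/-- Two points are isomorphic as modules iff they lie in the same `GL(d)`-orbit. -/
def Iso {Q : Quiv} {d : Q.V → ℕ} (M N : Rep K Q d) : Prop :=
  ∃ g, glAct K g M = N

/-- The `GL(d)`-orbit of a point of the representation space. -/
def glOrbit {Q : Quiv} {d : Q.V → ℕ} (M : Rep K Q d) : Set (Rep K Q d) :=
  {N | Iso K M N}

def IsGLInvariant {Q : Quiv} {d : Q.V → ℕ} (C : Set (Rep K Q d)) : Prop :=
  ∀ g M, M ∈ C → glAct K g M ∈ C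

/-- `C` is the closure of a single `GL(d)`-orbit. -/
def IsOrbitClosure {Q : Quiv} {d : Q.V → ℕ} (C : Set (Rep K Q d)) : Prop :=
  ∃ M : Rep K Q d, C = closure (glOrbit K M)

/-- Paths in a quiver, via Mathlib's `Quiver.Path`. -/
instance quivQuiver (Q : Quiv) : Quiver Q.V :=
  ⟨fun x y => {a : Q.Ar // Q.s a = x ∧ Q.t a = y}⟩

/-- The linear map attached to an arrow by a representation. -/
def arrowEval {Q : Quiv} {d : Q.V → ℕ} (M : Rep K Q d) {x y : Q.V} (e : x ⟶ y) :
    (Fin (d x) → K) →ₗ[K] (Fin (d y) → K) := by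
  obtain ⟨a, rfl, rfl⟩ := e
  exact (M.mat a).mulVecLin

/-- The linear map attached to a path by a representation. -/
def pathEval {Q : Quiv} {d : Q.V → ℕ} (M : Rep K Q d) :
    {x y : Q.V} → Quiver.Path x y → ((Fin (d x) → K) →ₗ[K] (Fin (d y) → K))
  | _, _, Quiver.Path.nil => LinearMap.id
  | _, _, Quiver.Path.cons p e => (arrowEval K M e).comp (pathEval M p)

/-- The evaluation of a K-linear combination of parallel paths (an element of the
path algebra) on a representation. -/
noncomputable def relEval {Q : Quiv} {d : Q.V → ℕ} (M : Rep K Q d) {x y : Q.V}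
    (r : Quiver.Path x y →₀ K) : (Fin (d x) → K) →ₗ[K] (Fin (d y) → K) :=
  r.sum fun p c => c • pathEval K M p

/-- A set of relations for a quiver: admissible elements of the path algebra. -/
structure RelSet (Q : Quiv) where
  rels : Set (Σ x y : Q.V, (Quiver.Path x y →₀ K))

/-- The module variety `mod(A,d)` of the bound quiver algebra `A = KQ/I`,
`I = ⟨rels⟩`: the locus where all relations vanish. -/
noncomputable def modVar {Q : Quiv} (R : RelSet K Q) (d : Q.V → ℕ) : Set (Rep K Q d) :=
  {M | ∀ r ∈ R.rels, relEval K M r.2.2 = 0}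

/-- `Q` has no oriented cycles. -/
def Quiv.IsAcyclic (Q : Quiv) : Prop :=
  ∀ (x : Q.V) (p : Quiver.Path x x), p = Quiver.Path.nil

/-- Admissibility of the ideal of relations, encoded semantically:
every relation lies in (the span of paths of) length `≥ 2`, and some power of the
arrow ideal is contained in the ideal of relations (i.e. sufficiently long paths
act by `0` on every module of the algebra). -/
noncomputable def RelSet.IsAdmissible {Q : Quiv} (R : RelSet K Q) : Prop :=
  (∀ r ∈ R.rels, ∀ p ∈ (r.2.2).support, 2 ≤ p.length) ∧
  ∃ L : ℕ, ∀ (d : Q.V → ℕ), ∀ M ∈ modVar K R d, ∀ (x y : Q.V) (p : Quiver.Path x y),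
    L ≤ p.length → pathEval K M p = 0

/-- A subrepresentation (= submodule) of a representation. -/
structure SubRep {Q : Quiv} {d : Q.V → ℕ} (M : Rep K Q d) where
  space : ∀ x : Q.V, Submodule K (Fin (d x) → K)
  stable : ∀ a : Q.Ar, ∀ v ∈ space (Q.s a), (M.mat a).mulVec v ∈ space (Q.t a)

/-- The dimension vector of a subrepresentation. -/
noncomputable def SubRep.dimVec {Q : Quiv} {d : Q.V → ℕ} {M : Rep K Q d}
    (W : SubRep K M) : Q.V → ℕ :=
  fun x => Module.finrank K (W.space x)

/-- The pairing `θ(e) = ∑ₓ θ(x) e(x)` of a weight with a dimension vector. -/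
def wt {Q : Quiv} (θ : Q.V → ℤ) (e : Q.V → ℕ) : ℤ := ∑ x : Q.V, θ x * (e x : ℤ)

/-- King's θ-semi-stability. -/
def IsSemiStable {Q : Quiv} {d : Q.V → ℕ} (θ : Q.V → ℤ) (M : Rep K Q d) : Prop :=
  wt θ d = 0 ∧ ∀ W : SubRep K M, wt θ (W.dimVec K) ≤ 0

/-- King's θ-stability. -/
def IsStable {Q : Quiv} {d : Q.V → ℕ} (θ : Q.V → ℤ) (M : Rep K Q d) : Prop :=
  d ≠ 0 ∧ wt θ d = 0 ∧
    ∀ W : SubRep K M, W.dimVec K ≠ 0 → W.dimVec K ≠ d → wt θ (W.dimVec K) < 0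

/-- Morphisms of representations. -/
def IsHom {Q : Quiv} {d d' : Q.V → ℕ} (M : Rep K Q d) (N : Rep K Q d')
    (φ : ∀ x : Q.V, Matrix (Fin (d' x)) (Fin (d x)) K) : Prop :=
  ∀ a : Q.Ar, φ (Q.t a) * M.mat a = N.mat a * φ (Q.s a)

/-- Endomorphisms of a representation. -/
def IsEndo {Q : Quiv} {d : Q.V → ℕ} (M : Rep K Q d)
    (φ : ∀ x : Q.V, Matrix (Fin (d x)) (Fin (d x)) K) : Prop :=
  IsHom K M M φ

/-- A Schur module: all endomorphisms are scalar, i.e. `End_A(M) ≅ K`. -/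
def IsSchur {Q : Quiv} {d : Q.V → ℕ} (M : Rep K Q d) : Prop :=
  ∀ φ, IsEndo K M φ → ∃ c : K, ∀ x : Q.V, φ x = c • (1 : Matrix (Fin (d x)) (Fin (d x)) K)

/-- The direct sum of two representations. -/
def dsum {Q : Quiv} {d₁ d₂ : Q.V → ℕ} (M : Rep K Q d₁) (N : Rep K Q d₂) :
    Rep K Q (d₁ + d₂) :=
  ⟨fun a => Matrix.reindex finSumFinEquiv finSumFinEquiv
    (Matrix.fromBlocks (M.mat a) 0 0 (N.mat a))⟩

/-- Transport of a representation along an equality of dimension vectors. -/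
def recast {Q : Quiv} {d d' : Q.V → ℕ} (h : d = d') (M : Rep K Q d) : Rep K Q d' :=
  h ▸ M

/-- The dimension vector of a list of representations. -/
def sumDim {Q : Quiv} : List (Σ e : Q.V → ℕ, Rep K Q e) → (Q.V → ℕ)
  | [] => 0
  | x :: L => x.1 + sumDim L

/-- The direct sum of a list of representations. -/
def listSum {Q : Quiv} : (L : List (Σ e : Q.V → ℕ, Rep K Q e)) → Rep K Q (sumDim K L)
  | [] => ⟨fun _ => 0⟩
  | x :: L => dsum K x.2 (listSum L)

/-- `M` is isomorphic to the direct sum of the members of the list `L`. -/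
def IsDirectSumOf {Q : Quiv} {d : Q.V → ℕ} (M : Rep K Q d)
    (L : List (Σ e : Q.V → ℕ, Rep K Q e)) : Prop :=
  ∃ h : sumDim K L = d, Iso K (recast K h (listSum K L)) M

/-- Indecomposability of a representation. -/
def Indec {Q : Quiv} {d : Q.V → ℕ} (M : Rep K Q d) : Prop :=
  d ≠ 0 ∧ ∀ (d₁ d₂ : Q.V → ℕ) (M₁ : Rep K Q d₁) (M₂ : Rep K Q d₂) (h : d₁ + d₂ = d),
    d₁ ≠ 0 → d₂ ≠ 0 → ¬ Iso K (recast K h (dsum K M₁ M₂)) M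

/-- An irreducible component of a (closed) subvariety `Z` of the representation
space: a maximal irreducible closed subset of `Z`. -/
def IsIrrComp {Q : Quiv} {d : Q.V → ℕ} (Z C : Set (Rep K Q d)) : Prop :=
  C ⊆ Z ∧ IsClosed C ∧ IsIrreducible C ∧
    ∀ D : Set (Rep K Q d), D ⊆ Z → IsClosed D → IsIrreducible D → C ⊆ D → C = D

/-- The θ-semi-stable locus of `C`. -/
def ssLocus {Q : Quiv} {d : Q.V → ℕ} (C : Set (Rep K Q d)) (θ : Q.V → ℤ) :
    Set (Rep K Q d) :=
  {M | M ∈ C ∧ IsSemiStable K θ M}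

/-- S-equivalence on the semistable locus: orbit closures meet inside the
semistable locus.  The GIT quotient identifies exactly S-equivalent points. -/
def SEquiv {Q : Quiv} {d : Q.V → ℕ} (C : Set (Rep K Q d)) (θ : Q.V → ℤ)
    (M N : ↥(ssLocus K C θ)) : Prop :=
  (closure (glOrbit K M.1) ∩ closure (glOrbit K N.1) ∩ ssLocus K C θ).Nonempty

/-- The moduli space `M(C)^{ss}_θ` of θ-semi-stable modules in `C`, realized
(as a topological space) as the quotient of the semistable locus of `C` by
S-equivalence; its points are the θ-polystable modules in `C`. -/
def ModuliSpace {Q : Quiv} {d : Q.V → ℕ} (C : Set (Rep K Q d)) (θ : Q.V → ℤ) : Type :=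
  Quot (SEquiv K C θ)

noncomputable instance {Q : Quiv} {d : Q.V → ℕ} (C : Set (Rep K Q d)) (θ : Q.V → ℤ) :
    TopologicalSpace (ModuliSpace K C θ) :=
  instTopologicalSpaceQuot

/-- The image of `C^{ss}_θ` in the moduli space of the ambient variety `Z`:
this is `M(C)^{ss}_θ` as a (closed) subvariety of `M(Z)^{ss}_θ`. -/
def moduliImage {Q : Quiv} {d : Q.V → ℕ} (Z C : Set (Rep K Q d)) (θ : Q.V → ℤ) :
    Set (ModuliSpace K Z θ) :=
  Quot.mk _ '' {M : ↥(ssLocus K Z θ) | M.1 ∈ C}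

/-- The `m`-th symmetric power of a topological space. -/
def SymPow (m : ℕ) (X : Type*) [TopologicalSpace X] : Type _ :=
  Quot (fun f g : Fin m → X => ∃ σ : Equiv.Perm (Fin m), f = g ∘ σ)

noncomputable instance (m : ℕ) (X : Type*) [TopologicalSpace X] :
    TopologicalSpace (SymPow m X) :=
  instTopologicalSpaceQuot

/-- Projective `m`-space over `K` with its Zariski topology (quotient of the
punctured affine cone). -/
def ProjSpace (m : ℕ) : Type :=
  Quot (fun v w : {x : AffSp K (Fin (m + 1)) // ∃ i, x i ≠ 0} =>
    ∃ c : K, c ≠ 0 ∧ ∀ i, w.1 i = c * v.1 i)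

noncomputable instance (m : ℕ) : TopologicalSpace (ProjSpace K m) :=
  instTopologicalSpaceQuot

/-- A product of projective spaces `ℙ^{m 0} × ⋯ × ℙ^{m (n-1)}` over `K`, with its
Zariski topology (quotient of a product of punctured affine cones, carrying the
Zariski topology of the total affine space). -/
def ProdProj (n : ℕ) (m : Fin n → ℕ) : Type :=
  Quot (fun v w : {x : AffSp K (Σ i : Fin n, Fin (m i + 1)) // ∀ i, ∃ j, x ⟨i, j⟩ ≠ 0} =>
    ∃ c : Fin n → K, (∀ i, c i ≠ 0) ∧ ∀ i j, w.1 ⟨i, j⟩ = c i * v.1 ⟨i, j⟩)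

noncomputable instance (n : ℕ) (m : Fin n → ℕ) : TopologicalSpace (ProdProj K n m) :=
  instTopologicalSpaceQuot

end ModuliPaper
namespace ModuliPaper

variable (K : Type) [Field K]

/- --------------------- semi-invariants --------------------- -/

/-- The value of the character `χ_θ` of `GL(d)` at `g`:
`χ_θ(g) = ∏ₓ det(g(x))^{θ(x)}`. -/
noncomputable def chiWt {Q : Quiv} {d : Q.V → ℕ} (θ : Q.V → ℤ)
    (g : ∀ x : Q.V, Matrix.GeneralLinearGroup (Fin (d x)) K) : K :=
  ∏ x : Q.V, ((g x : Matrix (Fin (d x)) (Fin (d x)) K).det) ^ (θ x)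

/-- A semi-invariant of weight `χ_θ` on `C`: a regular (polynomial) function on
`C` satisfying `f(g·M) = χ_θ(g)·f(M)`. -/
def IsSemiInvariant {Q : Quiv} {d : Q.V → ℕ} (C : Set (Rep K Q d)) (θ : Q.V → ℤ)
    (f : ↥C → K) : Prop :=
  (∃ p : MvPolynomial (CoordIdx Q d) K,
      ∀ M : ↥C, f M = MvPolynomial.eval (Rep.coords K M.1) p) ∧
  ∀ (g) (M : ↥C) (h : glAct K g M.1 ∈ C), f ⟨glAct K g M.1, h⟩ = chiWt K θ g * f M

/-- The space `SI(C)_θ` of semi-invariants of weight `χ_θ` on `C`. -/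
noncomputable def SIModule {Q : Quiv} {d : Q.V → ℕ} (C : Set (Rep K Q d))
    (θ : Q.V → ℤ) : Submodule K (↥C → K) where
  carrier := {f | IsSemiInvariant K C θ f}
  add_mem' := by
    rintro f₁ f₂ ⟨⟨p₁, hp₁⟩, hw₁⟩ ⟨⟨p₂, hp₂⟩, hw₂⟩
    refine ⟨⟨p₁ + p₂, fun M => ?_⟩, fun g M h => ?_⟩
    · simp [hp₁ M, hp₂ M]
    · have := hw₁ g M h; have := hw₂ g M h
      simp only [Pi.add_apply, *]; ring
  zero_mem' := ⟨⟨0, fun M => by simp⟩, fun g M h => by simp⟩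
  smul_mem' := by
    rintro c f ⟨⟨p, hp⟩, hw⟩
    refine ⟨⟨c • p, fun M => ?_⟩, fun g M h => ?_⟩
    · rw [Pi.smul_apply, hp M, smul_eq_mul]; exact (MvPolynomial.smul_eval _ _ _).symm
    · have := hw g M h
      simp only [Pi.smul_apply, smul_eq_mul, *]; ring

/- --------------------- coordinate rings and normality --------------------- -/

/-- The vanishing ideal of a subset of the representation space. -/
noncomputable def vanishingIdeal {Q : Quiv} {d : Q.V → ℕ} (C : Set (Rep K Q d)) :
    Ideal (MvPolynomial (CoordIdx Q d) K) where
  carrier := {p | ∀ M ∈ C, MvPolynomial.eval (Rep.coords K M) p = 0}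
  add_mem' := by intro p q hp hq M hM; simp [hp M hM, hq M hM]
  zero_mem' := by intro M hM; simp
  smul_mem' := by intro c p hp M hM; simp [smul_eq_mul, hp M hM]

/-- The coordinate ring `K[C]` of a subvariety of the representation space. -/
noncomputable def coordRing {Q : Quiv} {d : Q.V → ℕ} (C : Set (Rep K Q d)) : Type :=
  MvPolynomial (CoordIdx Q d) K ⧸ vanishingIdeal K C

noncomputable instance {Q : Quiv} {d : Q.V → ℕ} (C : Set (Rep K Q d)) :
    CommRing (coordRing K C) :=
  Ideal.Quotient.commRing _

/-- Normality of a variety: its coordinate ring is an integrally closed domain. -/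
def IsNormalVar {Q : Quiv} {d : Q.V → ℕ} (C : Set (Rep K Q d)) : Prop :=
  IsDomain (coordRing K C) ∧ IsIntegrallyClosed (coordRing K C)

/- --------------------- gentle and string algebras --------------------- -/

/-- "at most one element" of a set. -/
def AtMostOne {α : Type*} (s : Set α) : Prop := ∀ a ∈ s, ∀ b ∈ s, a = b

/-- "at most two elements" of a set. -/
def AtMostTwo {α : Type*} (s : Set α) : Prop :=
  ∀ a ∈ s, ∀ b ∈ s, ∀ c ∈ s, a = b ∨ a = c ∨ b = c

/-- A set of monomial (length-two) relations: pairs `(a,b)` of composable arrows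
(`a` followed by `b`), generating the ideal `I = ⟨{ba : (a,b) ∈ R}⟩`. -/
structure PairRels (Q : Quiv) where
  R : Set (Q.Ar × Q.Ar)
  comp : ∀ p ∈ R, Q.t p.1 = Q.s p.2

/-- The module variety of the algebra `KQ/⟨R⟩` with length-two monomial
relations `R`: the locus where all composites `M(b)M(a)`, `(a,b) ∈ R`, vanish. -/
def pairModVar {Q : Quiv} (P : PairRels Q) (d : Q.V → ℕ) : Set (Rep K Q d) :=
  {M | ∀ a b, (hab : (a, b) ∈ P.R) →
    ∀ (i : Fin (d (Q.t b))) (j : Fin (d (Q.s a))),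
      ∑ k : Fin (d (Q.t a)),
        M.mat b i (finCongr (congrArg d (P.comp (a, b) hab)) k) * M.mat a k j = 0}

/-- The gentle conditions on a bound quiver `(Q, I)` with `I` generated by the
length-two paths in `R`. -/
def PairRels.IsGentle {Q : Quiv} (P : PairRels Q) : Prop :=
  (∀ x : Q.V, AtMostTwo {a | Q.s a = x} ∧ AtMostTwo {a | Q.t a = x}) ∧
  (∀ a : Q.Ar, AtMostOne {b | Q.t a = Q.s b ∧ (a, b) ∉ P.R} ∧
               AtMostOne {b | Q.t b = Q.s a ∧ (b, a) ∉ P.R}) ∧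
  (∀ a : Q.Ar, AtMostOne {b | (a, b) ∈ P.R} ∧ AtMostOne {b | (b, a) ∈ P.R})

/-- The length-two path `a`-then-`b` in `Q`. -/
def path2 {Q : Quiv} (a b : Q.Ar) (h : Q.t a = Q.s b) : Quiver.Path (Q.s a) (Q.t b) :=
  (Quiver.Path.nil.cons (⟨a, rfl, rfl⟩ : (Q.s a : Q.V) ⟶ Q.t a)).cons
    (⟨b, h.symm, rfl⟩ : (Q.t a : Q.V) ⟶ Q.t b)

/-- A set of monomial relations (paths of length `≥ 2`). -/
structure MonRels (Q : Quiv) where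
  R : Set (Σ x y : Q.V, Quiver.Path x y)
  len2 : ∀ r ∈ R, 2 ≤ r.2.2.length

/-- The module variety of the monomial algebra `KQ/⟨R⟩`. -/
def monModVar {Q : Quiv} (R : MonRels Q) (d : Q.V → ℕ) : Set (Rep K Q d) :=
  {M | ∀ r ∈ R.R, pathEval K M r.2.2 = 0}

/-- The length-two path `a`-then-`b` lies in the monomial ideal `⟨R⟩`. -/
def MonRels.pairIn {Q : Quiv} (R : MonRels Q) (a b : Q.Ar) : Prop :=
  ∃ h : Q.t a = Q.s b, (⟨Q.s a, Q.t b, path2 a b h⟩ : Σ x y : Q.V, Quiver.Path x y) ∈ R.R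

/-- The string algebra conditions on a monomial bound quiver `(Q, ⟨R⟩)`. -/
def MonRels.IsString {Q : Quiv} (R : MonRels Q) : Prop :=
  (∀ x : Q.V, AtMostTwo {a | Q.s a = x} ∧ AtMostTwo {a | Q.t a = x}) ∧
  (∀ a : Q.Ar, AtMostOne {b | Q.t a = Q.s b ∧ ¬ R.pairIn a b} ∧
               AtMostOne {b | Q.t b = Q.s a ∧ ¬ R.pairIn b a})

/-- A coloring of a quiver: a map on arrows whose fibres are directed paths. -/
structure Coloring (Q : Quiv) (S : Type) where
  c : Q.Ar → S
  isPath : ∀ s : S, ∃ L : List Q.Ar, L.Nodup ∧ (∀ a, a ∈ L ↔ c a = s) ∧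
    L.Chain' (fun a b => Q.t a = Q.s b)

/-- The set of length-two relations `I_c` induced by a coloring: all composable
pairs of arrows of the same color. -/
def colorRels {Q : Quiv} {S : Type} (col : Coloring Q S) : PairRels Q where
  R := {p | Q.t p.1 = Q.s p.2 ∧ col.c p.1 = col.c p.2}
  comp := fun _ hp => hp.1

/- --------------------- band modules (string algebras) --------------------- -/

/-- Over an acyclic string algebra, the indecomposable modules are string and
band modules (Butler–Ringel), and the band modules are exactly the
indecomposables `M` with `dim M = ∑ₐ rank M(a)`. -/
def IsBand {Q : Quiv} {d : Q.V → ℕ} (M : Rep K Q d) : Prop :=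
  Indec K M ∧ (∑ x : Q.V, d x) = ∑ a : Q.Ar, (M.mat a).rank

/-- `M` is (isomorphic to) a direct sum of band modules. -/
def IsSumOfBands {Q : Quiv} {d : Q.V → ℕ} (M : Rep K Q d) : Prop :=
  ∃ L : List (Σ e : Q.V → ℕ, Rep K Q e), (∀ p ∈ L, IsBand K p.2) ∧ IsDirectSumOf K M L

/-- A regular irreducible component: the generic module of `C` is a direct sum
of band modules. -/
def IsGenericallyBands {Q : Quiv} {d : Q.V → ℕ} (C : Set (Rep K Q d)) : Prop :=
  ∃ U : Set (Rep K Q d), IsOpen U ∧ (U ∩ C).Nonempty ∧ ∀ M ∈ U ∩ C, IsSumOfBands K M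

end ModuliPaper
namespace ModuliPaper

variable (K : Type) [Field K]

/- --------------------- tame and Schur-tame --------------------- -/

/-- A one-parameter algebraic family of `d`-dimensional representations defined
over a localization `K[t]_f` of `K[t]`: a free `K[t]_f`-module structure is
encoded by matrices of polynomials divided by a power of `f`. -/
structure ParamFamily (Q : Quiv) (d : Q.V → ℕ) where
  f : Polynomial K
  hf : f ≠ 0
  k : ℕ
  num : ∀ a : Q.Ar, Matrix (Fin (d (Q.t a))) (Fin (d (Q.s a))) (Polynomial K)

/-- The member of the family at the parameter `lam` (i.e. `T ⊗_{K[t]_f} K[t]/(t-lam)`). -/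
noncomputable def ParamFamily.evalAt {Q : Quiv} {d : Q.V → ℕ} (F : ParamFamily K Q d)
    (lam : K) : Rep K Q d :=
  ⟨fun a => Matrix.of fun i j =>
    Polynomial.eval lam (F.num a i j) / (Polynomial.eval lam F.f) ^ F.k⟩

/-- The algebra with module varieties `MV` is Schur-tame: for every dimension
vector `d` there are finitely many one-parameter families of `d`-dimensional
modules, each consisting of pairwise non-isomorphic Schur modules (a
Schur-embedding `T_i ⊗_{R_i} -`), such that every `d`-dimensional Schur module
— up to finitely many isomorphism classes — belongs to one of the families. -/
noncomputable def IsSchurTame {Q : Quiv} (MV : ∀ d : Q.V → ℕ, Set (Rep K Q d)) : Prop :=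
  ∀ d : Q.V → ℕ, ∃ (n : ℕ) (F : Fin n → ParamFamily K Q d),
    (∀ i lam, Polynomial.eval lam (F i).f ≠ 0 →
      (F i).evalAt K lam ∈ MV d ∧ IsSchur K ((F i).evalAt K lam)) ∧
    (∀ i lam₁ lam₂, Polynomial.eval lam₁ (F i).f ≠ 0 → Polynomial.eval lam₂ (F i).f ≠ 0 →
      Iso K ((F i).evalAt K lam₁) ((F i).evalAt K lam₂) → lam₁ = lam₂) ∧
    ∃ Exc : Set (Rep K Q d), Exc.Finite ∧
      ∀ M ∈ MV d, IsSchur K M →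
        (∃ i lam, Polynomial.eval lam (F i).f ≠ 0 ∧ Iso K M ((F i).evalAt K lam)) ∨
        (∃ E ∈ Exc, Iso K M E)

/-- The algebra with module varieties `MV` is tame: for every dimension vector
`d` there are finitely many one-parameter families of `d`-dimensional modules,
each consisting of pairwise non-isomorphic indecomposable modules (a
representation embedding `T_i ⊗_{R_i} -`), such that every `d`-dimensional
indecomposable module — up to finitely many isomorphism classes — belongs to
one of the families. -/
noncomputable def IsTame {Q : Quiv} (MV : ∀ d : Q.V → ℕ, Set (Rep K Q d)) : Prop :=
  ∀ d : Q.V → ℕ, ∃ (n : ℕ) (F : Fin n → ParamFamily K Q d),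
    (∀ i lam, Polynomial.eval lam (F i).f ≠ 0 →
      (F i).evalAt K lam ∈ MV d ∧ Indec K ((F i).evalAt K lam)) ∧
    (∀ i lam₁ lam₂, Polynomial.eval lam₁ (F i).f ≠ 0 → Polynomial.eval lam₂ (F i).f ≠ 0 →
      Iso K ((F i).evalAt K lam₁) ((F i).evalAt K lam₂) → lam₁ = lam₂) ∧
    ∃ Exc : Set (Rep K Q d), Exc.Finite ∧
      ∀ M ∈ MV d, Indec K M →
        (∃ i lam, Polynomial.eval lam (F i).f ≠ 0 ∧ Iso K M ((F i).evalAt K lam)) ∨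
        (∃ E ∈ Exc, Iso K M E)

/- --------------------- strictly wild algebras --------------------- -/

/-- The representation of `Q` of dimension vector `m • e` obtained from a
template `T` of matrices over the free algebra `K⟨x,y⟩` (encoding an
`A`-`K⟨x,y⟩`-bimodule free of finite rank over `K⟨x,y⟩`) by specializing
`(x,y)` to the pair of `m × m` matrices `(X,Y)`. -/
noncomputable def blockRep {Q : Quiv} (e : Q.V → ℕ) (m : ℕ)
    (T : ∀ a : Q.Ar, Matrix (Fin (e (Q.t a))) (Fin (e (Q.s a))) (FreeAlgebra K (Fin 2)))
    (X Y : Matrix (Fin m) (Fin m) K) : Rep K Q (fun x => e x * m) :=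
  ⟨fun a => Matrix.of fun i j =>
    (FreeAlgebra.lift K ![X, Y] (T a (finProdFinEquiv.symm i).1 (finProdFinEquiv.symm j).1))
      (finProdFinEquiv.symm i).2 (finProdFinEquiv.symm j).2⟩

/-- The block-diagonal family of matrices induced by an `m' × m` matrix `ψ`:
the image of a morphism of `K⟨x,y⟩`-modules under the functor `T ⊗ -`. -/
def blockify {Q : Quiv} (e : Q.V → ℕ) {m m' : ℕ} (ψ : Matrix (Fin m') (Fin m) K) :
    ∀ x : Q.V, Matrix (Fin (e x * m')) (Fin (e x * m)) K :=
  fun _ => Matrix.of fun i j =>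
    if (finProdFinEquiv.symm i).1 = (finProdFinEquiv.symm j).1 then
      ψ (finProdFinEquiv.symm i).2 (finProdFinEquiv.symm j).2
    else 0

/-- Strict wildness of the algebra with module varieties `MV`: there is an exact
`K`-linear functor `mod K⟨x,y⟩ → mod A`, given by tensoring with a bimodule
free of finite rank over `K⟨x,y⟩` (encoded by a template `T`), which is fully
faithful. -/
noncomputable def IsStrictlyWild {Q : Quiv} (MV : ∀ d : Q.V → ℕ, Set (Rep K Q d)) : Prop :=
  ∃ (e : Q.V → ℕ)
    (T : ∀ a : Q.Ar, Matrix (Fin (e (Q.t a))) (Fin (e (Q.s a))) (FreeAlgebra K (Fin 2))),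
    (∀ (m : ℕ) (X Y : Matrix (Fin m) (Fin m) K),
      blockRep K e m T X Y ∈ MV (fun x => e x * m)) ∧
    (∀ (m m' : ℕ) (X Y : Matrix (Fin m) (Fin m) K) (X' Y' : Matrix (Fin m') (Fin m') K),
      -- functoriality: morphisms of `K⟨x,y⟩`-modules map to morphisms
      (∀ ψ : Matrix (Fin m') (Fin m) K, ψ * X = X' * ψ → ψ * Y = Y' * ψ →
        IsHom K (blockRep K e m T X Y) (blockRep K e m' T X' Y') (blockify K e ψ)) ∧
      -- faithfulness
      (∀ ψ₁ ψ₂ : Matrix (Fin m') (Fin m) K, blockify (Q := Q) K e ψ₁ = blockify K e ψ₂ → ψ₁ = ψ₂) ∧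
      -- fullness
      (∀ φ, IsHom K (blockRep K e m T X Y) (blockRep K e m' T X' Y') φ →
        ∃ ψ : Matrix (Fin m') (Fin m) K, ψ * X = X' * ψ ∧ ψ * Y = Y' * ψ ∧ φ = blockify K e ψ))

/- --------------------- θ-stable decompositions --------------------- -/

/-- The list of representations `N i j`, `j < m i`, over the indices `i` with
`i < l`. -/
def famList {Q : Quiv} {nn : ℕ} (dd : Fin nn → Q.V → ℕ) (m : Fin nn → ℕ) (l : ℕ)
    (N : ∀ i : Fin nn, Fin (m i) → Rep K Q (dd i)) : List (Σ e : Q.V → ℕ, Rep K Q e) :=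
  ((List.finRange nn).filter (fun i : Fin nn => decide ((i : ℕ) < l))).flatMap
    (fun i : Fin nn => (List.finRange (m i)).map (fun j => ⟨dd i, N i j⟩))

/-- A θ-stable decomposition `C = m₀·C₀ ∔ m₁·C₁ ∔ ⋯`: for the generic module
`M ∈ C^{ss}_θ`, the associated θ-polystable module `gr_θ(M)` (the unique
polystable module in the closure of the orbit of `M` within the semistable
locus) is a direct sum of θ-stable modules, `m i` of which belong to `Cs i`. -/
def ThetaStableDecomp {Q : Quiv} {d : Q.V → ℕ} (C : Set (Rep K Q d)) (θ : Q.V → ℤ)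
    {nn : ℕ} (dd : Fin nn → Q.V → ℕ) (m : Fin nn → ℕ)
    (Cs : ∀ i, Set (Rep K Q (dd i))) : Prop :=
  ∃ U : Set (Rep K Q d), IsOpen U ∧ (U ∩ C).Nonempty ∧
    ∀ M ∈ U ∩ C, IsSemiStable K θ M ∧
      ∃ N : ∀ i, Fin (m i) → Rep K Q (dd i),
        (∀ i j, N i j ∈ Cs i ∧ IsStable K θ (N i j)) ∧
        ∃ P ∈ closure (glOrbit K M), IsSemiStable K θ P ∧
          IsDirectSumOf K P (famList K dd m nn N)

/-- The dimension vector `∑_{i < l} m i • dd i`. -/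
def belowDim {Q : Quiv} {nn : ℕ} (dd : Fin nn → Q.V → ℕ) (m : Fin nn → ℕ) (l : ℕ) :
    Q.V → ℕ :=
  fun x => ∑ i ∈ Finset.univ.filter (fun i : Fin nn => (i : ℕ) < l), m i * dd i x

/-- The direct sum locus `C₀^{⊕ m₀} ⊕ ⋯ ⊕ C_{l-1}^{⊕ m_{l-1}}`. -/
def sumLocusBelow {Q : Quiv} {nn : ℕ} (dd : Fin nn → Q.V → ℕ) (m : Fin nn → ℕ) (l : ℕ)
    (Cs : ∀ i, Set (Rep K Q (dd i))) : Set (Rep K Q (belowDim dd m l)) :=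
  {M | ∃ N : ∀ i, Fin (m i) → Rep K Q (dd i),
    (∀ (i : Fin nn) (j : Fin (m i)), (i : ℕ) < l → N i j ∈ Cs i) ∧ IsDirectSumOf K M (famList K dd m l N)}

/- --------------------- extensions --------------------- -/

/-- The extension of `N` by `M` (`0 → M → Z → N → 0`) determined by the blocks
`E`: `Z(a) = [[M(a), E(a)], [0, N(a)]]`. -/
def triSum {Q : Quiv} {d₁ d₂ : Q.V → ℕ} (M : Rep K Q d₁) (N : Rep K Q d₂)
    (E : ∀ a : Q.Ar, Matrix (Fin (d₁ (Q.t a))) (Fin (d₂ (Q.s a))) K) :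
    Rep K Q (d₁ + d₂) :=
  ⟨fun a => Matrix.reindex finSumFinEquiv finSumFinEquiv
    (Matrix.fromBlocks (M.mat a) (E a) 0 (N.mat a))⟩

/-- `ext¹_A(D, E) = 0`: the minimal dimension of `Ext¹_A(X,Y)` over
`(X,Y) ∈ D × E` vanishes, i.e. there is a pair `(X,Y) ∈ D × E` all of whose
extensions (inside the module variety `MV`) split. -/
def Ext1Vanishes {Q : Quiv} (MV : ∀ e : Q.V → ℕ, Set (Rep K Q e)) {dX dY : Q.V → ℕ}
    (D : Set (Rep K Q dX)) (E : Set (Rep K Q dY)) : Prop :=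
  ∃ X ∈ D, ∃ Y ∈ E, ∀ B, triSum K Y X B ∈ MV (dY + dX) →
    Iso K (triSum K Y X B) (dsum K Y X)

end ModuliPaper

/-!
Being Schur is an open condition along a one-parameter family `T ⊗ K[t]/(t - λ)`. The
endomorphisms of the member at `λ` whose `(p₀, p₀)` entry at a vertex `x₀` vanishes form the
kernel of a matrix `B(λ)` with polynomial entries, and the member is Schur iff `B(λ)` is
injective. If `B(λ₀)` is injective it has a left inverse `G`, and `det (G * B(λ))` is a
polynomial in `λ` that does not vanish at `λ₀`; off its roots `B(λ)` stays injective.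

Hence in a tame parametrization each family either has no Schur member, and is discarded, or
is Schur away from finitely many parameters, and is restricted to those. A Schur module of
positive dimension is indecomposable, so it lies in a kept family, among the finitely many
discarded members, or among the finitely many exceptions of the tame parametrization.
-/

open Polynomial

theorem Matrix.exists_eval_ne_zero_forall_injective_mulVec {T U K : Type*} [Fintype T] [Fintype U]
    [DecidableEq U] [Field K] (B : Matrix T U K[X]) {lam₀ : K}
    (h : Function.Injective (B.map (eval lam₀)).mulVec) :
    ∃ q : K[X], q.eval lam₀ ≠ 0 ∧
      ∀ lam, q.eval lam ≠ 0 → Function.Injective (B.map (eval lam)).mulVec := by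
  classical
  set G := LinearMap.toMatrix' (B.map (eval lam₀)).mulVecLin.leftInverse
  have hG : G * B.map (eval lam₀) = 1 := by
    rw [← LinearMap.toMatrix'_toLin' (B.map _), ← LinearMap.toMatrix'_comp, Matrix.toLin'_apply',
      LinearMap.leftInverse_comp_of_inj (LinearMap.ker_eq_bot.mpr h), LinearMap.toMatrix'_id]
  have hq : ∀ lam, (G.map C * B).det.eval lam = (G * B.map (eval lam)).det := fun lam => by
    rw [← coe_evalRingHom, RingHom.map_det, RingHom.mapMatrix_apply, Matrix.map_mul,
      Matrix.map_map]
    simp [Function.comp_def]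
  refine ⟨(G.map C * B).det, by simp [hq, hG], fun lam hlam => ?_⟩
  rw [hq, ← isUnit_iff_ne_zero, ← Matrix.isUnit_iff_isUnit_det,
    ← Matrix.mulVec_injective_iff_isUnit] at hlam
  refine .of_comp (f := G.mulVec) ?_
  simpa only [Function.comp_def, Matrix.mulVec_mulVec] using hlam

theorem LinearMap.toMatrix'_map_of_comp {R S T U : Type*} [CommRing R] [CommRing S] [Fintype U]
    [DecidableEq U] (σ : R →+* S) {L : (U → R) →ₗ[R] (T → R)} {L' : (U → S) →ₗ[S] (T → S)}
    (h : ∀ v, L' (σ ∘ v) = σ ∘ L v) : (LinearMap.toMatrix' L).map σ = LinearMap.toMatrix' L' := by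
  ext t u
  have hv : σ ∘ Pi.single u 1 = Pi.single u 1 := by
    ext u'
    simp [Pi.single_apply, apply_ite σ]
  rw [Matrix.map_apply, LinearMap.toMatrix'_apply, LinearMap.toMatrix'_apply, ← hv, h]
  rfl

namespace ModuliPaper

section EndoEquations

variable {R S : Type*} [CommRing R] [CommRing S] {Q : Quiv} {d : Q.V → ℕ}

abbrev EndoCoord (Q : Quiv) (d : Q.V → ℕ) : Type := Σ x : Q.V, Fin (d x) × Fin (d x)

abbrev EndoEqn (Q : Quiv) (d : Q.V → ℕ) : Type :=
  (Σ a : Q.Ar, Fin (d (Q.t a)) × Fin (d (Q.s a))) ⊕ Unit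

def endoFamily (v : EndoCoord Q d → R) (x : Q.V) : Matrix (Fin (d x)) (Fin (d x)) R :=
  Matrix.of fun p q => v ⟨x, p, q⟩

lemma endoFamily_add (v w : EndoCoord Q d → R) :
    endoFamily (v + w) = endoFamily v + endoFamily w := rfl

lemma endoFamily_smul (c : R) (v : EndoCoord Q d → R) :
    endoFamily (c • v) = c • endoFamily v := rfl

lemma endoFamily_comp (σ : R →+* S) (v : EndoCoord Q d → R) (x : Q.V) :
    endoFamily (σ ∘ v) x = (endoFamily v x).map σ := rfl

/-- The kernel consists of the endomorphisms of `N` whose `(p₀, p₀)` entry at `x₀` vanishes;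
fixing that entry is what makes "Schur" equivalent to injectivity. -/
def endoDefect (N : ∀ a : Q.Ar, Matrix (Fin (d (Q.t a))) (Fin (d (Q.s a))) R) (x₀ : Q.V)
    (p₀ : Fin (d x₀)) : (EndoCoord Q d → R) →ₗ[R] (EndoEqn Q d → R) where
  toFun v := Sum.elim
    (fun e => (endoFamily v (Q.t e.1) * N e.1 - N e.1 * endoFamily v (Q.s e.1)) e.2.1 e.2.2)
    fun _ => v ⟨x₀, p₀, p₀⟩
  map_add' v w := by
    ext (⟨a, i, j⟩ | _)
    · simp only [Sum.elim_inl, Pi.add_apply, endoFamily_add, Matrix.add_mul,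
        Matrix.mul_add, Matrix.sub_apply, Matrix.add_apply]
      abel
    · rfl
  map_smul' c v := by
    ext (⟨a, i, j⟩ | _)
    · simp [endoFamily_smul, mul_sub]
    · rfl

lemma endoDefect_map (σ : R →+* S) (N : ∀ a : Q.Ar, Matrix (Fin (d (Q.t a))) (Fin (d (Q.s a))) R)
    (x₀ : Q.V) (p₀ : Fin (d x₀)) (v : EndoCoord Q d → R) :
    endoDefect (fun a => (N a).map σ) x₀ p₀ (σ ∘ v) = σ ∘ endoDefect N x₀ p₀ v := by
  ext (⟨a, i, j⟩ | _)
  · simp only [endoDefect, LinearMap.coe_mk, AddHom.coe_mk, Sum.elim_inl, Function.comp_apply,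
      endoFamily_comp, ← Matrix.map_mul, Matrix.sub_apply, Matrix.map_apply, map_sub]
  · rfl

end EndoEquations

instance {K : Type} {Q : Quiv} : Subsingleton (Rep K Q 0) :=
  ⟨fun ⟨_⟩ ⟨_⟩ => congrArg Rep.mk <| funext fun _ => Matrix.ext fun i => i.elim0⟩

lemma finite_setOf_dim_eq_zero {K : Type} {Q : Quiv} (d : Q.V → ℕ) :
    {_M : Rep K Q d | d = 0}.Finite := by
  refine Set.Subsingleton.finite ?_
  rintro M (rfl : d = 0) N -
  exact Subsingleton.elim M N

variable {K : Type} [Field K] {Q : Quiv}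

lemma IsHom.comp {d₁ d₂ d₃ : Q.V → ℕ} {M : Rep K Q d₁} {N : Rep K Q d₂} {P : Rep K Q d₃}
    {φ : ∀ x, Matrix (Fin (d₂ x)) (Fin (d₁ x)) K} {ψ : ∀ x, Matrix (Fin (d₃ x)) (Fin (d₂ x)) K}
    (hφ : IsHom K M N φ) (hψ : IsHom K N P ψ) : IsHom K M P fun x => ψ x * φ x := by
  intro a
  rw [Matrix.mul_assoc, hφ a, ← Matrix.mul_assoc, hψ a, Matrix.mul_assoc]

variable {d : Q.V → ℕ}

lemma isHom_glAct (g : ∀ x : Q.V, Matrix.GeneralLinearGroup (Fin (d x)) K) (M : Rep K Q d) :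
    IsHom K M (glAct K g M) fun x => g x := by
  intro a
  simp [glAct, Matrix.mul_assoc]

lemma isHom_glAct_inv (g : ∀ x : Q.V, Matrix.GeneralLinearGroup (Fin (d x)) K)
    (M : Rep K Q d) : IsHom K (glAct K g M) M fun x => ↑(g x)⁻¹ := by
  intro a
  simp [glAct, ← Matrix.mul_assoc]

lemma glAct_inv_glAct (g : ∀ x : Q.V, Matrix.GeneralLinearGroup (Fin (d x)) K)
    (M : Rep K Q d) : glAct K (fun x => (g x)⁻¹) (glAct K g M) = M := by
  simp [glAct, ← Matrix.mul_assoc]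

lemma Iso.refl (M : Rep K Q d) : Iso K M M :=
  ⟨1, by simp [glAct]⟩

lemma Iso.symm {M N : Rep K Q d} : Iso K M N → Iso K N M := by
  rintro ⟨g, rfl⟩
  exact ⟨_, glAct_inv_glAct g M⟩

lemma IsSchur.of_iso {M N : Rep K Q d} (hM : IsSchur K M) (h : Iso K M N) : IsSchur K N := by
  obtain ⟨g, rfl⟩ := h
  intro ψ hψ
  obtain ⟨c, hc⟩ := hM _ (((isHom_glAct g M).comp hψ).comp (isHom_glAct_inv g M))
  refine ⟨c, fun x => ?_⟩
  calc ψ x = g x * (↑(g x)⁻¹ * (ψ x * g x)) * ↑(g x)⁻¹ := by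
        rw [Units.mul_inv_cancel_left, Units.mul_inv_cancel_right]
    _ = c • 1 := by rw [hc x]; simp

lemma IsSchur.indec (hd : d ≠ 0) {M : Rep K Q d} (hM : IsSchur K M) : Indec K M := by
  refine ⟨hd, fun d₁ d₂ M₁ M₂ h h₁ h₂ hiso => ?_⟩
  subst h
  -- the projection onto the first summand is a non-scalar endomorphism of `M₁ ⊕ M₂`
  let π : ∀ x : Q.V, Matrix (Fin ((d₁ + d₂) x)) (Fin ((d₁ + d₂) x)) K := fun x =>
    Matrix.reindex finSumFinEquiv finSumFinEquiv (Matrix.fromBlocks 1 0 0 0)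
  have hπ : IsEndo K (dsum K M₁ M₂) π := fun a => by
    simp [π, dsum, Matrix.fromBlocks_multiply]
  obtain ⟨c, hc⟩ := hM.of_iso hiso.symm π hπ
  obtain ⟨x₁, hx₁⟩ := Function.ne_iff.mp h₁
  obtain ⟨x₂, hx₂⟩ := Function.ne_iff.mp h₂
  have hc₁ := congrFun₂ (hc x₁) (finSumFinEquiv (.inl ⟨0, Nat.pos_of_ne_zero hx₁⟩))
    (finSumFinEquiv (.inl ⟨0, Nat.pos_of_ne_zero hx₁⟩))
  have hc₂ := congrFun₂ (hc x₂) (finSumFinEquiv (.inr ⟨0, Nat.pos_of_ne_zero hx₂⟩))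
    (finSumFinEquiv (.inr ⟨0, Nat.pos_of_ne_zero hx₂⟩))
  simp only [π, Matrix.reindex_apply, Matrix.submatrix_apply, Equiv.symm_apply_apply,
    Matrix.fromBlocks_apply₁₁, Matrix.fromBlocks_apply₂₂, Matrix.smul_apply,
    Matrix.one_apply_eq, Matrix.zero_apply, smul_eq_mul, mul_one] at hc₁ hc₂
  exact one_ne_zero (hc₁.trans hc₂.symm)

lemma endoDefect_eq_zero_iff (M : Rep K Q d) (x₀ : Q.V) (p₀ : Fin (d x₀))
    (v : EndoCoord Q d → K) :
    endoDefect M.mat x₀ p₀ v = 0 ↔ IsEndo K M (endoFamily v) ∧ v ⟨x₀, p₀, p₀⟩ = 0 := by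
  simp [funext_iff, Sum.forall, Sigma.forall, endoDefect, IsEndo, IsHom, ← Matrix.ext_iff,
    sub_eq_zero]

lemma isSchur_iff_injective_endoDefect (M : Rep K Q d) (x₀ : Q.V) (p₀ : Fin (d x₀)) :
    IsSchur K M ↔ Function.Injective (endoDefect M.mat x₀ p₀) := by
  rw [injective_iff_map_eq_zero]
  constructor
  · intro hM v hv
    rw [endoDefect_eq_zero_iff] at hv
    obtain ⟨c, hc⟩ := hM _ hv.1
    have hc₀ : c = 0 := by simpa [endoFamily, hv.2] using (congrFun₂ (hc x₀) p₀ p₀).symm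
    ext ⟨x, p, q⟩
    simpa [endoFamily, hc₀] using congrFun₂ (hc x) p q
  · intro h φ hφ
    set c := φ x₀ p₀ p₀
    have hψ : IsEndo K M fun x => φ x - c • 1 := fun a => by
      simp [Matrix.sub_mul, Matrix.mul_sub, hφ a]
    have hψ₀ := h (fun u => (φ u.1 - c • 1) u.2.1 u.2.2)
      ((endoDefect_eq_zero_iff M x₀ p₀ _).2 ⟨hψ, by simp [c]⟩)
    refine ⟨c, fun x => ?_⟩
    ext p q
    simpa [sub_eq_zero] using congrFun hψ₀ ⟨x, p, q⟩

lemma isSchur_of_dim_eq_zero (hd : ∀ x, d x = 0) (M : Rep K Q d) : IsSchur K M :=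
  fun _ _ => ⟨0, fun x => Matrix.ext fun p => (p.cast (hd x)).elim0⟩

lemma isSchur_iff_of_mat_eq_smul {M N : Rep K Q d} {c : K} (hc : c ≠ 0)
    (h : ∀ a, N.mat a = c • M.mat a) : IsSchur K N ↔ IsSchur K M := by
  have hEndo : ∀ φ, IsEndo K N φ ↔ IsEndo K M φ := fun φ => forall_congr' fun a => by
    rw [h, Matrix.mul_smul, Matrix.smul_mul, smul_right_inj hc]
  simp only [IsSchur, hEndo]

namespace ParamFamily

variable (F : ParamFamily K Q d)

noncomputable def numAt (lam : K) : Rep K Q d :=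
  ⟨fun a => (F.num a).map (eval lam)⟩

lemma evalAt_mat (lam : K) (a : Q.Ar) :
    (F.evalAt K lam).mat a = ((F.f.eval lam) ^ F.k)⁻¹ • (F.numAt lam).mat a := by
  ext
  simp [evalAt, numAt, div_eq_inv_mul]

lemma isSchur_evalAt_iff {lam : K} (hf : F.f.eval lam ≠ 0) (x₀ : Q.V) (p₀ : Fin (d x₀)) :
    IsSchur K (F.evalAt K lam) ↔
      Function.Injective
        ((LinearMap.toMatrix' (endoDefect F.num x₀ p₀)).map (eval lam)).mulVec := by
  rw [isSchur_iff_of_mat_eq_smul (inv_ne_zero (pow_ne_zero _ hf)) (F.evalAt_mat lam),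
    isSchur_iff_injective_endoDefect _ x₀ p₀, ← coe_evalRingHom,
    LinearMap.toMatrix'_map_of_comp _ (endoDefect_map (evalRingHom lam) F.num x₀ p₀)]
  exact iff_of_eq (congrArg _ (_root_.funext (LinearMap.toMatrix'_mulVec _)).symm)

theorem exists_forall_isSchur_evalAt {lam₀ : K} (h₀ : F.f.eval lam₀ ≠ 0)
    (hS : IsSchur K (F.evalAt K lam₀)) :
    ∃ q : K[X], q ≠ 0 ∧ ∀ lam, F.f.eval lam ≠ 0 → q.eval lam ≠ 0 → IsSchur K (F.evalAt K lam) := by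
  by_cases hd : ∀ x, d x = 0
  · exact ⟨1, one_ne_zero, fun lam _ _ => isSchur_of_dim_eq_zero hd _⟩
  obtain ⟨x₀, hx₀⟩ := not_forall.mp hd
  let p₀ : Fin (d x₀) := ⟨0, Nat.pos_of_ne_zero hx₀⟩
  obtain ⟨q, hq₀, hq⟩ :=
    Matrix.exists_eval_ne_zero_forall_injective_mulVec _ ((F.isSchur_evalAt_iff h₀ x₀ p₀).1 hS)
  exact ⟨q, fun h => hq₀ (by simp [h]), fun lam hf hqlam =>
    (F.isSchur_evalAt_iff hf x₀ p₀).2 (hq lam hqlam)⟩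

noncomputable def restrict (q : K[X]) (hq : q ≠ 0) : ParamFamily K Q d where
  f := F.f * q
  hf := mul_ne_zero F.hf hq
  k := F.k
  num a := q ^ F.k • F.num a

lemma evalAt_restrict {q : K[X]} (hq : q ≠ 0) {lam : K} (hlam : q.eval lam ≠ 0) :
    (F.restrict q hq).evalAt K lam = F.evalAt K lam := by
  simp only [evalAt, restrict]
  congr
  ext a i j
  simp only [Matrix.of_apply, Matrix.smul_apply, smul_eq_mul, eval_mul, eval_pow, mul_pow]
  rw [mul_comm, mul_div_mul_right _ _ (pow_ne_zero _ hlam)]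

theorem exists_isSchur_restriction {lam₀ : K} (h₀ : F.f.eval lam₀ ≠ 0)
    (hS : IsSchur K (F.evalAt K lam₀)) :
    ∃ G : ParamFamily K Q d,
      (∀ lam, G.f.eval lam ≠ 0 →
        F.f.eval lam ≠ 0 ∧ G.evalAt K lam = F.evalAt K lam ∧ IsSchur K (G.evalAt K lam)) ∧
      {lam | F.f.eval lam ≠ 0 ∧ G.f.eval lam = 0}.Finite := by
  obtain ⟨q, hq₀, hq⟩ := F.exists_forall_isSchur_evalAt h₀ hS
  refine ⟨F.restrict q hq₀, fun lam hlam => ?_, ?_⟩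
  · obtain ⟨hf, hqlam⟩ := mul_ne_zero_iff.mp (eval_mul (p := F.f) ▸ hlam)
    rw [F.evalAt_restrict hq₀ hqlam]
    exact ⟨hf, rfl, hq lam hf hqlam⟩
  · refine (q.finite_setOfPred_isRoot hq₀).subset fun lam ⟨hf, hlam⟩ => ?_
    simpa [restrict, hf] using hlam

end ParamFamily

theorem IsTame.isSchurTame {MV : ∀ d : Q.V → ℕ, Set (Rep K Q d)} (h : IsTame K MV) :
    IsSchurTame K MV := by
  classical
  intro d
  obtain ⟨n, F, hmem, hinj, Exc, hExc, hcov⟩ := h d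
  let S := {i : Fin n // ∃ lam, (F i).f.eval lam ≠ 0 ∧ IsSchur K ((F i).evalAt K lam)}
  choose G hG hGfin using fun i : S =>
    (F i).exists_isSchur_restriction i.2.choose_spec.1 i.2.choose_spec.2
  let e := Fintype.equivFin S
  refine ⟨_, fun j => G (e.symm j), fun j lam hlam => ?_, fun j lam₁ lam₂ h₁ h₂ hiso => ?_,
    Exc ∪ {_M | d = 0} ∪
      ⋃ i : S, (F i).evalAt K '' {lam | (F i).f.eval lam ≠ 0 ∧ (G i).f.eval lam = 0},
    (hExc.union (finite_setOf_dim_eq_zero d)).union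
      (Set.finite_iUnion fun i => (hGfin i).image _),
    fun M hM hS => ?_⟩
  · obtain ⟨hf, hGF, hGS⟩ := hG _ lam hlam
    exact ⟨hGF ▸ (hmem _ lam hf).1, hGS⟩
  · obtain ⟨hf₁, hGF₁, -⟩ := hG _ lam₁ h₁
    obtain ⟨hf₂, hGF₂, -⟩ := hG _ lam₂ h₂
    exact hinj _ lam₁ lam₂ hf₁ hf₂ (hGF₁ ▸ hGF₂ ▸ hiso)
  by_cases hd : d = 0
  · exact .inr ⟨M, .inl (.inr hd), .refl M⟩
  obtain ⟨i, lam, hf, hiso⟩ | ⟨E, hE, hiso⟩ := hcov M hM (hS.indec hd)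
  · let i' : S := ⟨i, lam, hf, hS.of_iso hiso⟩
    by_cases hGlam : (G i').f.eval lam = 0
    · exact .inr ⟨_, .inr (Set.mem_iUnion.2 ⟨i', lam, ⟨hf, hGlam⟩, rfl⟩), hiso⟩
    · refine .inl ⟨e i', lam, by simpa using hGlam, ?_⟩
      simpa [(hG i' lam hGlam).2.1] using hiso
  · exact .inr ⟨E, .inl (.inl hE), hiso⟩

theorem tame_implies_schurTame_general
    (K : Type) [Field K]
    (Q : Quiv) (R : RelSet K Q)
    (htame : IsTame K (modVar K R)) :
    IsSchurTame K (modVar K R) :=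
  htame.isSchurTame

/-- Lemma 2.3.  Every tame finite-dimensional (bound quiver)
algebra `A = KQ/I` over an algebraically closed field `K` of characteristic
zero is Schur-tame. -/
theorem tame_implies_schurTame
    (K : Type) [Field K] [IsAlgClosed K] [CharZero K]
    (Q : Quiv) (R : RelSet K Q) (hadm : R.IsAdmissible)
    (htame : IsTame K (modVar K R)) :
    IsSchurTame K (modVar K R) :=
  tame_implies_schurTame_general K Q R htame

end ModuliPaper
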